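/- Let f be entire, nonvanishing on ℂ, of exponential type (|f(z)| ≤ C e^{A|z|}), and bounded on the horizontal line {t + i : t ∈ ℝ}. Then f(z) = C₀ e^{iaz} for some C₀ ∈ ℂ \ {0} and a ∈ ℝ. -/

import Mathlib

/-!
A zero-free entire function is `exp ∘ g` with `g` entire (take `g` a primitive of `f' / f`).
Exponential type means `Re g z ≤ log C + A ‖z‖`, so by Borel–Carathéodory `g` grows at most
linearly, and Cauchy's estimate with Liouville's theorem make `g` affine, `g z = g 0 + b z`.
Finally `Re g (t + i) = Re g 0 + t Re b - Im b` is bounded above in `t ∈ ℝ` only if `Re b = 0`.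
-/

open Complex Metric

theorem Differentiable.exists_forall_eq_exp {f : ℂ → ℂ} (hf : Differentiable ℂ f)
    (hnz : ∀ z, f z ≠ 0) : ∃ g : ℂ → ℂ, Differentiable ℂ g ∧ ∀ z, f z = Complex.exp (g z) := by
  obtain ⟨g, hg0, hg⟩ :=
    (hf.deriv.div hf hnz).isExactOn_univ.with_val_at 0 (Complex.log (f 0))
  have hg' : ∀ z, HasDerivAt g (_root_.deriv f z / f z) z := fun z => hg z (Set.mem_univ z)
  have hconst : ∀ z, HasDerivAt (fun w => f w * Complex.exp (-g w)) 0 z := fun z =>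
    ((hf z).hasDerivAt.fun_mul (hg' z).fun_neg.cexp).congr_deriv (by field_simp [hnz z]; ring)
  refine ⟨g, fun z => (hg' z).differentiableAt, fun z => ?_⟩
  have h := is_const_of_deriv_eq_zero (fun w => (hconst w).differentiableAt)
    (fun w => (hconst w).deriv) z 0
  rw [hg0, Complex.exp_neg, Complex.exp_neg, Complex.exp_log (hnz 0), mul_inv_cancel₀ (hnz 0),
    mul_inv_eq_one₀ (Complex.exp_ne_zero _)] at h
  exact h

theorem Differentiable.norm_le_of_re_le {g : ℂ → ℂ} (hg : Differentiable ℂ g) {a b : ℝ}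
    (hre : ∀ z, (g z).re ≤ a + b * ‖z‖) (z : ℂ) :
    ‖g z‖ ≤ 2 * (|a| + |b| + 1) + 3 * ‖g 0‖ + 4 * |b| * ‖z‖ := by
  set R := 2 * ‖z‖ + 1
  set M := |a| + 1 + |b| * R
  have hz : z ∈ ball (0 : ℂ) R := by rw [mem_ball_zero_iff]; linarith [norm_nonneg z]
  have hre_ball : Set.MapsTo g (ball 0 R) {w | w.re ≤ M} := by
    intro w hw
    have hw : ‖w‖ < R := mem_ball_zero_iff.mp hw
    have hbw : b * ‖w‖ ≤ |b| * R := by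
      nlinarith [le_abs_self b, abs_nonneg b, norm_nonneg w]
    show (g w).re ≤ M
    linarith [hre w, le_abs_self a]
  have hBC := borelCaratheodory (by positivity) hg.differentiableOn hre_ball
    (by positivity) hz
  have hden : R - ‖z‖ = ‖z‖ + 1 := by ring
  rw [hden] at hBC
  have hle_one : ‖z‖ / (‖z‖ + 1) ≤ 1 := div_le_one_of_le₀ (by linarith) (by positivity)
  have hle_three : (R + ‖z‖) / (‖z‖ + 1) ≤ 3 := by
    rw [div_le_iff₀ (by positivity)]; linarith [norm_nonneg z]
  calc ‖g z‖ ≤ 2 * M * (‖z‖ / (‖z‖ + 1)) + ‖g 0‖ * ((R + ‖z‖) / (‖z‖ + 1)) := by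
        simpa only [mul_div_assoc] using hBC
    _ ≤ 2 * M * 1 + ‖g 0‖ * 3 := by gcongr
    _ = _ := by ring

theorem Differentiable.eq_add_mul_of_norm_le {g : ℂ → ℂ} (hg : Differentiable ℂ g) {α β : ℝ}
    (hgrowth : ∀ z, ‖g z‖ ≤ α + β * ‖z‖) (z : ℂ) : g z = g 0 + _root_.deriv g 0 * z := by
  have hderiv_le : ∀ w, ‖_root_.deriv g w‖ ≤ |α| + 2 * |β| := by
    intro w
    -- Cauchy's estimate on a circle of radius `‖w‖ + 1` about `w` gives a bound uniform in `w`.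
    set R := ‖w‖ + 1
    have hR : 1 ≤ R := by linarith [norm_nonneg w]
    have hsphere : ∀ ζ ∈ sphere w R, ‖g ζ‖ ≤ (|α| + 2 * |β|) * R := by
      intro ζ hζ
      have hζ : ‖ζ‖ ≤ 2 * R := by
        linarith [norm_le_norm_add_norm_sub' ζ w, mem_sphere_iff_norm.mp hζ]
      calc ‖g ζ‖ ≤ α + β * ‖ζ‖ := hgrowth ζ
        _ ≤ |α| + |β| * (2 * R) := by
          gcongr
          exacts [le_abs_self α, le_abs_self β]
        _ ≤ (|α| + 2 * |β|) * R := by nlinarith [abs_nonneg α, abs_nonneg β]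
    simpa [mul_div_cancel_right₀ _ (by positivity : R ≠ 0)] using
      norm_deriv_le_of_forall_mem_sphere_norm_le (by positivity) hg.diffContOnCl hsphere
  have hderiv_const : ∀ w, _root_.deriv g w = _root_.deriv g 0 := fun w =>
    hg.deriv.apply_eq_apply_of_bounded (isBounded_iff_forall_norm_le.2
      ⟨_, by rintro _ ⟨w, rfl⟩; exact hderiv_le w⟩) w 0
  have hlin : ∀ w, HasDerivAt (fun w => g w - _root_.deriv g 0 * w) 0 w := fun w =>
    ((hg w).hasDerivAt.sub ((hasDerivAt_id w).const_mul _)).congr_deriv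
      (by rw [hderiv_const w, mul_one, sub_self])
  have := is_const_of_deriv_eq_zero (fun w => (hlin w).differentiableAt)
    (fun w => (hlin w).deriv) z 0
  simp only [mul_zero, sub_zero] at this
  linear_combination this

theorem eq_zero_of_forall_mul_le {q K : ℝ} (h : ∀ t, q * t ≤ K) : q = 0 := by
  by_contra hq
  linarith [mul_div_cancel₀ (K + 1) hq ▸ h ((K + 1) / q)]

/-- an entire, zero-free function of exponential type which is bounded on the
horizontal line `{t + i : t ∈ ℝ}` has the form `C₀ e^{iaz}` with `C₀ ≠ 0` and `a ∈ ℝ`. -/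
theorem stmt_18 (f : ℂ → ℂ) (hf : Differentiable ℂ f) (hnz : ∀ z, f z ≠ 0)
    (A C : ℝ) (hgrow : ∀ z : ℂ, ‖f z‖ ≤ C * Real.exp (A * ‖z‖))
    (M : ℝ) (hbd : ∀ t : ℝ, ‖f ((t : ℂ) + Complex.I)‖ ≤ M) :
    ∃ (C₀ : ℂ) (a : ℝ), C₀ ≠ 0 ∧
      ∀ z : ℂ, f z = C₀ * Complex.exp (Complex.I * (a : ℂ) * z) := by
  obtain ⟨g, hg, hfg⟩ := hf.exists_forall_eq_exp hnz
  have hC : C ≠ 0 := by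
    rintro rfl
    simpa [hnz 0] using hgrow 0
  have hre : ∀ z, (g z).re ≤ Real.log C + A * ‖z‖ := fun z => by
    have hz := hgrow z
    rw [hfg, norm_exp] at hz
    have := Real.log_le_log (Real.exp_pos _) hz
    rwa [Real.log_exp, Real.log_mul hC (Real.exp_ne_zero _), Real.log_exp] at this
  have haff := hg.eq_add_mul_of_norm_le (hg.norm_le_of_re_le hre)
  set b := deriv g 0
  have hb : b.re = 0 := by
    refine eq_zero_of_forall_mul_le (K := Real.log M - (g 0).re + b.im) fun t => ?_
    have hline := hbd t
    rw [hfg, haff, norm_exp] at hline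
    have := Real.log_le_log (Real.exp_pos _) hline
    simp only [Real.log_exp, add_re, add_im, mul_re, ofReal_re, ofReal_im, I_re, I_im] at this
    linarith
  refine ⟨Complex.exp (g 0), b.im, Complex.exp_ne_zero _, fun z => ?_⟩
  rw [hfg, haff, Complex.exp_add]
  congr 2
  apply Complex.ext <;> simp [hb]
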